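/- Let u ∈ H^{2,3}(ℝ) be real-valued, and define the integral operator A by (Af)(x,k) = ∫_x^∞ 2iφ(x,y) (u″(y)/(2m(y))) e^{2ikφ(x,y)} f(y,k) dy for measurable f : [0,∞)×ℝ → ℂ. Then there is an absolute constant C such that for every f ∈ L²([0,∞)×ℝ): sup_{x≥0} ‖(Af)(x,·)‖_{L²_k(ℝ)} ≤ C ( ‖u″‖_{L^{2,1}(ℝ)} + ‖u‖_{H¹(ℝ)} ‖u″‖_{L^{2,1/2}(ℝ)} ) ‖f‖_{L²([0,∞)×ℝ)} and ‖Af‖_{L²([0,∞)×ℝ)} ≤ C ( ‖u″‖_{L^{2,3/2}(ℝ)} + ‖u‖_{H¹(ℝ)} ‖u″‖_{L^{2,1}(ℝ)} ) ‖f‖_{L²([0,∞)×ℝ)}. -/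

import Mathlib

open MeasureTheory ENNReal NNReal

/-- `m = 1 + (u′)²`. -/
noncomputable def mfun (u : ℝ → ℝ) (x : ℝ) : ℝ := 1 + (deriv u x) ^ 2

/-- `φ(x,y) = ∫_x^y √(m(s)) ds`. -/
noncomputable def phi (u : ℝ → ℝ) (x y : ℝ) : ℝ := ∫ s in x..y, Real.sqrt (mfun u s)

/-- The integral operator
`(Af)(x,k) = ∫_x^∞ 2iφ(x,y) (u″(y)/(2m(y))) e^{2ikφ(x,y)} f(y,k) dy`. -/
noncomputable def Aop (u : ℝ → ℝ) (f : ℝ × ℝ → ℂ) (x k : ℝ) : ℂ :=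
  ∫ y in Set.Ioi x, (2 * Complex.I * (phi u x y : ℂ))
      * ((deriv (deriv u) y / (2 * mfun u y) : ℝ) : ℂ)
      * Complex.exp (2 * Complex.I * (k : ℂ) * (phi u x y : ℂ)) * f (y, k)

/-- Weighted `L²` norm `‖⟨x⟩^s f‖_{L²}` with `⟨x⟩ = (1+x²)^{1/2}`. -/
noncomputable def wnorm (s : ℝ) (f : ℝ → ℝ) : ℝ≥0∞ :=
  eLpNorm (fun x => (1 + x ^ 2) ^ (s / 2) * f x) 2 volume

/-- The `H¹(ℝ)` norm `(‖u‖²_{L²} + ‖u′‖²_{L²})^{1/2}`. -/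
noncomputable def h1norm (u : ℝ → ℝ) : ℝ≥0∞ :=
  (eLpNorm u 2 volume ^ 2 + eLpNorm (deriv u) 2 volume ^ 2) ^ ((1 : ℝ) / 2)

/-- Membership in the weighted Sobolev space `H^{2,3}(ℝ)`. -/
def MemH23 (u : ℝ → ℝ) : Prop :=
  ∀ j : Fin 3, MemLp (fun x : ℝ => (1 + x ^ 2) ^ ((3 : ℝ) / 2) * iteratedDeriv (j : ℕ) u x)
    2 volume

/-! ### Auxiliary material -/

noncomputable def wgt (r y : ℝ) : ℝ≥0∞ := ENNReal.ofReal ((1 + y ^ 2) ^ r)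

noncomputable def gE (u : ℝ → ℝ) (y : ℝ) : ℝ≥0∞ :=
  (wgt ((1:ℝ)/2) y + eLpNorm (deriv u) 2 volume * wgt ((1:ℝ)/4) y)
    * (‖deriv (deriv u) y‖₊ : ℝ≥0∞)

noncomputable def Gfun (u : ℝ → ℝ) (x : ℝ) : ℝ≥0∞ :=
  (∫⁻ y in Set.Ioi x, gE u y ^ (2:ℝ)) ^ ((1:ℝ)/2)

section basic

lemma cont_d1 {u : ℝ → ℝ} (hu : ContDiff ℝ 2 u) : Continuous (deriv u) :=
  hu.continuous_deriv one_le_two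

lemma cd1 {u : ℝ → ℝ} (hu : ContDiff ℝ 2 u) : ContDiff ℝ 1 (deriv u) := by
  have h2 : ContDiff ℝ (1 + 1 : ℕ) u := by exact_mod_cast hu
  exact (contDiff_succ_iff_deriv.mp h2).2.2

lemma cont_d2 {u : ℝ → ℝ} (hu : ContDiff ℝ 2 u) : Continuous (deriv (deriv u)) :=
  (cd1 hu).continuous_deriv le_rfl

lemma mfun_ge_one (u : ℝ → ℝ) (y : ℝ) : 1 ≤ mfun u y := by
  unfold mfun; nlinarith [sq_nonneg (deriv u y)]

lemma cont_sqrtm {u : ℝ → ℝ} (hu : Continuous (deriv u)) :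
    Continuous fun s => Real.sqrt (mfun u s) :=
  (continuous_const.add (hu.pow 2)).sqrt

lemma phi_nonneg {u : ℝ → ℝ} {x y : ℝ} (hxy : x ≤ y) : 0 ≤ phi u x y :=
  intervalIntegral.integral_nonneg hxy (fun s _ => Real.sqrt_nonneg _)

lemma sqrt_m_le (u : ℝ → ℝ) (s : ℝ) : Real.sqrt (mfun u s) ≤ 1 + |deriv u s| := by
  rw [show mfun u s = 1 + (deriv u s)^2 from rfl]
  have h : 1 + (deriv u s)^2 ≤ (1 + |deriv u s|)^2 := by
    nlinarith [abs_nonneg (deriv u s), sq_abs (deriv u s)]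
  calc Real.sqrt (1 + (deriv u s)^2) ≤ Real.sqrt ((1 + |deriv u s|)^2) := Real.sqrt_le_sqrt h
    _ = 1 + |deriv u s| := Real.sqrt_sq (by positivity)

lemma phi_le {u : ℝ → ℝ} (hu : Continuous (deriv u)) {x y : ℝ} (hxy : x ≤ y) :
    phi u x y ≤ (y - x) + ∫ s in x..y, |deriv u s| := by
  have h1 : IntervalIntegrable (fun s => Real.sqrt (mfun u s)) volume x y :=
    (cont_sqrtm hu).intervalIntegrable x y
  have h2 : IntervalIntegrable (fun s => 1 + |deriv u s|) volume x y :=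
    (continuous_const.add hu.abs).intervalIntegrable x y
  calc phi u x y ≤ ∫ s in x..y, (1 + |deriv u s|) :=
        intervalIntegral.integral_mono_on hxy h1 h2 (fun s _ => sqrt_m_le u s)
    _ = (y - x) + ∫ s in x..y, |deriv u s| := by
        rw [intervalIntegral.integral_add (intervalIntegrable_const)
          (hu.abs.intervalIntegrable x y)]
        simp

lemma cs_abs {g : ℝ → ℝ} (hg : Continuous g) (x y : ℝ) (hxy : x ≤ y) :
    ENNReal.ofReal (∫ s in x..y, |g s|) ≤
      (ENNReal.ofReal (y - x)) ^ ((1:ℝ)/2) * eLpNorm g 2 volume := by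
  have hint : IntegrableOn (fun s => |g s|) (Set.Ioc x y) volume :=
    (hg.abs.integrableOn_Ioc)
  rw [intervalIntegral.integral_of_le hxy,
    ofReal_integral_eq_lintegral_ofReal hint (Filter.Eventually.of_forall fun s => abs_nonneg _)]
  have hcs := ENNReal.lintegral_mul_le_Lp_mul_Lq (volume.restrict (Set.Ioc x y))
      Real.HolderConjugate.two_two
      (aemeasurable_const (b := (1:ℝ≥0∞))) (hg.measurable.nnnorm.coe_nnreal_ennreal.aemeasurable)
  simp only [Pi.mul_apply, one_mul] at hcs
  calc ∫⁻ s in Set.Ioc x y, ENNReal.ofReal |g s| ∂volume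
      = ∫⁻ s in Set.Ioc x y, (‖g s‖₊ : ℝ≥0∞) ∂volume := by
        congr 1; ext s; rw [← Real.enorm_eq_ofReal (abs_nonneg _)]; simp [enorm_eq_nnnorm]
    _ ≤ (∫⁻ _ in Set.Ioc x y, (1:ℝ≥0∞) ^ (2:ℝ) ∂volume) ^ ((1:ℝ)/2) *
        (∫⁻ s in Set.Ioc x y, (‖g s‖₊ : ℝ≥0∞) ^ (2:ℝ) ∂volume) ^ ((1:ℝ)/2) := hcs
    _ ≤ (ENNReal.ofReal (y - x)) ^ ((1:ℝ)/2) * eLpNorm g 2 volume := by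
        gcongr
        · simp [Real.volume_Ioc]
        · rw [eLpNorm_eq_lintegral_rpow_enorm_toReal two_ne_zero ENNReal.ofNat_ne_top]
          norm_num
          exact ENNReal.rpow_le_rpow (setLIntegral_le_lintegral _ _) (by norm_num)

lemma self_le_w (y : ℝ) : y ≤ (1 + y ^ 2) ^ ((1:ℝ)/2) := by
  rw [← Real.sqrt_eq_rpow]
  calc y ≤ |y| := le_abs_self y
    _ = Real.sqrt (y ^ 2) := (Real.sqrt_sq_eq_abs y).symm
    _ ≤ Real.sqrt (1 + y ^ 2) := Real.sqrt_le_sqrt (by linarith)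

lemma wgt_mul (a b y : ℝ) : wgt a y * wgt b y = wgt (a+b) y := by
  unfold wgt
  rw [← ENNReal.ofReal_mul (by positivity), ← Real.rpow_add (by positivity)]

lemma wgt_rpow (a y : ℝ) {p : ℝ} (hp : 0 ≤ p) : wgt a y ^ p = wgt (a*p) y := by
  unfold wgt
  rw [ENNReal.ofReal_rpow_of_nonneg (by positivity) hp, ← Real.rpow_mul (by positivity)]

lemma wgt_cont (a : ℝ) : Continuous fun y : ℝ => (1 + y ^ 2) ^ a := by
  apply Continuous.rpow_const (by continuity)
  intro y; left; positivity

lemma wgt_meas (a : ℝ) : Measurable (wgt a) :=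
  ENNReal.measurable_ofReal.comp (wgt_cont a).measurable

lemma ofReal_sub_le_wgt {x y : ℝ} (hx : 0 ≤ x) :
    ENNReal.ofReal (y - x) ≤ wgt ((1:ℝ)/2) y := by
  apply ENNReal.ofReal_le_ofReal
  calc y - x ≤ y := by linarith
    _ ≤ _ := self_le_w y

lemma ofReal_le_wgt (y : ℝ) : ENNReal.ofReal y ≤ wgt ((1:ℝ)/2) y := by
  simpa using ofReal_sub_le_wgt (le_refl (0:ℝ)) (y := y)

lemma phi_bound {u : ℝ → ℝ} (hu : Continuous (deriv u)) {x y : ℝ} (hx : 0 ≤ x) (hxy : x ≤ y) :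
    ENNReal.ofReal (phi u x y) ≤
      wgt ((1:ℝ)/2) y + eLpNorm (deriv u) 2 volume * wgt ((1:ℝ)/4) y := by
  have h1 : ENNReal.ofReal (phi u x y) ≤
      ENNReal.ofReal (y - x) + ENNReal.ofReal (∫ s in x..y, |deriv u s|) := by
    rw [← ENNReal.ofReal_add (by linarith) (intervalIntegral.integral_nonneg hxy
      (fun s _ => abs_nonneg _))]
    exact ENNReal.ofReal_le_ofReal (phi_le hu hxy)
  refine h1.trans (add_le_add (ofReal_sub_le_wgt hx) ?_)
  calc ENNReal.ofReal (∫ s in x..y, |deriv u s|)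
      ≤ (ENNReal.ofReal (y - x)) ^ ((1:ℝ)/2) * eLpNorm (deriv u) 2 volume :=
        cs_abs hu x y hxy
    _ ≤ (wgt ((1:ℝ)/2) y) ^ ((1:ℝ)/2) * eLpNorm (deriv u) 2 volume := by
        gcongr
        exact ofReal_sub_le_wgt hx
    _ = eLpNorm (deriv u) 2 volume * wgt ((1:ℝ)/4) y := by
        rw [wgt_rpow _ _ (by norm_num : (0:ℝ) ≤ 1/2), mul_comm]
        norm_num

lemma norm_exp_I_mul (k φ : ℝ) : ‖Complex.exp (2 * Complex.I * (k:ℂ) * (φ:ℂ))‖ = 1 := by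
  rw [Complex.norm_exp]
  have : (2 * Complex.I * (k:ℂ) * (φ:ℂ)).re = 0 := by simp
  rw [this, Real.exp_zero]

lemma integrand_norm {a m : ℝ} (hm : 1 ≤ m) (φ k : ℝ) (z : ℂ) :
    ‖2 * Complex.I * (φ:ℂ) * ((a / (2 * m) : ℝ):ℂ)
        * Complex.exp (2 * Complex.I * (k:ℂ) * (φ:ℂ)) * z‖
      ≤ |φ| * |a| * ‖z‖ := by
  have hm0 : (0:ℝ) < m := lt_of_lt_of_le one_pos hm
  rw [norm_mul, norm_mul, norm_mul, norm_exp_I_mul, norm_mul, norm_mul]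
  simp only [Complex.norm_real, Complex.norm_I, Real.norm_eq_abs, mul_one,
    Complex.norm_ofNat]
  have h1 : |a / (2 * m)| = |a| / (2 * m) := by
    rw [abs_div, abs_of_pos (show (0:ℝ) < 2 * m by linarith)]
  rw [h1]
  have h3 : 2 * |φ| * (|a| / (2 * m)) ≤ |φ| * |a| := by
    rw [show 2 * |φ| * (|a| / (2 * m)) = |φ| * |a| / m by field_simp]
    exact div_le_self (by positivity) hm
  exact mul_le_mul_of_nonneg_right h3 (norm_nonneg z)

lemma wnorm_eq' (s r : ℝ) (hr : s/2 = r) (g : ℝ → ℝ) :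
    wnorm s g = (∫⁻ y, (wgt r y * (‖g y‖₊ : ℝ≥0∞)) ^ (2:ℝ)) ^ ((1:ℝ)/2) := by
  subst hr
  unfold wnorm
  rw [eLpNorm_eq_lintegral_rpow_enorm_toReal two_ne_zero ENNReal.ofNat_ne_top]
  simp only [ENNReal.toReal_ofNat, enorm_eq_nnnorm]
  congr 1
  apply lintegral_congr
  intro y
  congr 1
  rw [nnnorm_mul, ENNReal.coe_mul]
  congr 1
  rw [← enorm_eq_nnnorm, Real.enorm_eq_ofReal (Real.rpow_nonneg (by positivity) _)]
  rfl

end basic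

section main

lemma minkowski_wgt {c : ℝ → ℝ} (hc : Continuous c) (N : ℝ≥0∞) (a b : ℝ) :
    (∫⁻ y, ((wgt a y + N * wgt b y) * (‖c y‖₊ : ℝ≥0∞)) ^ (2:ℝ)) ^ ((1:ℝ)/2)
      ≤ (∫⁻ y, (wgt a y * (‖c y‖₊ : ℝ≥0∞)) ^ (2:ℝ)) ^ ((1:ℝ)/2)
        + N * (∫⁻ y, (wgt b y * (‖c y‖₊ : ℝ≥0∞)) ^ (2:ℝ)) ^ ((1:ℝ)/2) := by
  have hmeas1 : AEMeasurable (fun y => wgt a y * (‖c y‖₊ : ℝ≥0∞)) volume :=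
    ((wgt_meas a).mul hc.measurable.nnnorm.coe_nnreal_ennreal).aemeasurable
  have hmeas2 : AEMeasurable (fun y => N * (wgt b y * (‖c y‖₊ : ℝ≥0∞))) volume :=
    (((wgt_meas b).mul hc.measurable.nnnorm.coe_nnreal_ennreal).const_mul N).aemeasurable
  have key := ENNReal.lintegral_Lp_add_le hmeas1 hmeas2 (p := 2) one_le_two
  have heq : ∀ y : ℝ, (wgt a y + N * wgt b y) * (‖c y‖₊ : ℝ≥0∞)
      = wgt a y * (‖c y‖₊ : ℝ≥0∞) + N * (wgt b y * (‖c y‖₊ : ℝ≥0∞)) := by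
    intro y; ring
  calc (∫⁻ y, ((wgt a y + N * wgt b y) * (‖c y‖₊ : ℝ≥0∞)) ^ (2:ℝ)) ^ ((1:ℝ)/2)
      = (∫⁻ y, ((fun y => wgt a y * (‖c y‖₊ : ℝ≥0∞))
          + fun y => N * (wgt b y * (‖c y‖₊ : ℝ≥0∞))) y ^ (2:ℝ)) ^ ((1:ℝ)/2) := by
        congr 1; apply lintegral_congr; intro y; rw [heq y]; rfl
    _ ≤ (∫⁻ y, (wgt a y * (‖c y‖₊ : ℝ≥0∞)) ^ (2:ℝ)) ^ ((1:ℝ)/2)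
        + (∫⁻ y, (N * (wgt b y * (‖c y‖₊ : ℝ≥0∞))) ^ (2:ℝ)) ^ ((1:ℝ)/2) := key
    _ ≤ _ := by
        gcongr
        have h : (∫⁻ y, (N * (wgt b y * (‖c y‖₊ : ℝ≥0∞))) ^ (2:ℝ))
            = N ^ (2:ℝ) * ∫⁻ y, (wgt b y * (‖c y‖₊ : ℝ≥0∞)) ^ (2:ℝ) := by
          rw [← lintegral_const_mul'' (f := fun y => (wgt b y * (‖c y‖₊ : ℝ≥0∞)) ^ (2:ℝ)) _ (((wgt_meas b).mul
            hc.measurable.nnnorm.coe_nnreal_ennreal).pow_const _).aemeasurable]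
          apply lintegral_congr; intro y
          exact ENNReal.mul_rpow_of_nonneg _ _ (by norm_num)
        rw [h, ENNReal.mul_rpow_of_nonneg _ _ (by norm_num : (0:ℝ) ≤ (1:ℝ)/2),
          ← ENNReal.rpow_mul]
        norm_num

variable {u : ℝ → ℝ}

lemma gE_meas (hu : ContDiff ℝ 2 u) : Measurable (gE u) :=
  ((wgt_meas _).add ((wgt_meas _).const_mul _)).mul
    (cont_d2 hu).measurable.nnnorm.coe_nnreal_ennreal

lemma N_le_h1 (u : ℝ → ℝ) : eLpNorm (deriv u) 2 volume ≤ h1norm u := by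
  set N := eLpNorm (deriv u) 2 volume
  have h : N = (N ^ (2:ℕ)) ^ ((1:ℝ)/2) := by
    rw [← ENNReal.rpow_natCast, ← ENNReal.rpow_mul]
    norm_num
  rw [h]
  unfold h1norm
  exact ENNReal.rpow_le_rpow le_add_self (by norm_num)

lemma G_le (hu : ContDiff ℝ 2 u) (x : ℝ) :
    Gfun u x ≤ wnorm 1 (fun y => deriv (deriv u) y)
      + h1norm u * wnorm ((1:ℝ)/2) (fun y => deriv (deriv u) y) := by
  set N := eLpNorm (deriv u) 2 volume with hN
  calc Gfun u x ≤ (∫⁻ y, gE u y ^ (2:ℝ)) ^ ((1:ℝ)/2) :=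
        ENNReal.rpow_le_rpow (setLIntegral_le_lintegral _ _) (by norm_num)
    _ ≤ (∫⁻ y, (wgt ((1:ℝ)/2) y * (‖deriv (deriv u) y‖₊ : ℝ≥0∞)) ^ (2:ℝ)) ^ ((1:ℝ)/2)
        + N * (∫⁻ y, (wgt ((1:ℝ)/4) y * (‖deriv (deriv u) y‖₊ : ℝ≥0∞)) ^ (2:ℝ)) ^ ((1:ℝ)/2) :=
        minkowski_wgt (cont_d2 hu) N _ _
    _ ≤ _ := by
        rw [wnorm_eq' 1 ((1:ℝ)/2) (by norm_num), wnorm_eq' ((1:ℝ)/2) ((1:ℝ)/4) (by norm_num)]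
        gcongr
        exact N_le_h1 u

end main

section main2
variable {u : ℝ → ℝ}

noncomputable def Nu (u : ℝ → ℝ) : ℝ≥0∞ := eLpNorm (deriv u) 2 volume

lemma gE_eq (u : ℝ → ℝ) (y : ℝ) :
    gE u y = (wgt ((1:ℝ)/2) y + Nu u * wgt ((1:ℝ)/4) y) * (‖deriv (deriv u) y‖₊ : ℝ≥0∞) := rfl

lemma Gfun_sq (u : ℝ → ℝ) (x : ℝ) :
    Gfun u x ^ (2:ℝ) = ∫⁻ y in Set.Ioi x, gE u y ^ (2:ℝ) := by
  rw [Gfun, ← ENNReal.rpow_mul]; norm_num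

lemma Gfun_meas (hu : ContDiff ℝ 2 u) : Measurable (Gfun u) := by
  apply Measurable.pow_const
  have h : ∀ x : ℝ, (∫⁻ y in Set.Ioi x, gE u y ^ (2:ℝ))
      = ∫⁻ y, (if x < y then gE u y ^ (2:ℝ) else 0) ∂volume := by
    intro x
    rw [← lintegral_indicator measurableSet_Ioi]
    apply lintegral_congr; intro y
    simp [Set.indicator_apply, Set.mem_Ioi]
  simp_rw [h]
  apply Measurable.lintegral_prod_right (f := fun x y => if x < y then gE u y ^ (2:ℝ) else 0)
  exact Measurable.ite (measurableSet_lt measurable_fst measurable_snd)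
    (((gE_meas hu).comp measurable_snd).pow_const _) measurable_const

lemma wgt_sq (y : ℝ) : wgt ((1:ℝ)/2) y = wgt ((1:ℝ)/4) y ^ (2:ℝ) := by
  rw [wgt_rpow _ _ (by norm_num : (0:ℝ) ≤ 2)]; norm_num

lemma pointwise_key (u : ℝ → ℝ) (y : ℝ) :
    wgt ((1:ℝ)/2) y * gE u y ^ (2:ℝ)
      = ((wgt ((3:ℝ)/4) y + Nu u * wgt ((1:ℝ)/2) y)
          * (‖deriv (deriv u) y‖₊ : ℝ≥0∞)) ^ (2:ℝ) := by
  have h2 : (0:ℝ) ≤ 2 := by norm_num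
  have hfac : wgt ((1:ℝ)/4) y * (wgt ((1:ℝ)/2) y + Nu u * wgt ((1:ℝ)/4) y)
      = wgt ((3:ℝ)/4) y + Nu u * wgt ((1:ℝ)/2) y := by
    rw [mul_add, wgt_mul, ← mul_assoc, mul_comm (wgt ((1:ℝ)/4) y) (Nu u), mul_assoc, wgt_mul]
    norm_num
  calc wgt ((1:ℝ)/2) y * gE u y ^ (2:ℝ)
      = wgt ((1:ℝ)/2) y * ((wgt ((1:ℝ)/2) y + Nu u * wgt ((1:ℝ)/4) y) ^ (2:ℝ)
          * ((‖deriv (deriv u) y‖₊ : ℝ≥0∞)) ^ (2:ℝ)) := by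
        rw [gE_eq u, ENNReal.mul_rpow_of_nonneg _ _ h2]
    _ = (wgt ((1:ℝ)/4) y * (wgt ((1:ℝ)/2) y + Nu u * wgt ((1:ℝ)/4) y)
          * (‖deriv (deriv u) y‖₊ : ℝ≥0∞)) ^ (2:ℝ) := by
        nth_rewrite 1 [wgt_sq y]
        rw [ENNReal.mul_rpow_of_nonneg _ _ h2, ENNReal.mul_rpow_of_nonneg _ _ h2]
        ring
    _ = _ := by rw [hfac]

lemma GG_key (hu : ContDiff ℝ 2 u) :
    (∫⁻ x in Set.Ici (0:ℝ), Gfun u x ^ (2:ℝ)) ^ ((1:ℝ)/2)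
      ≤ (∫⁻ y, ((wgt ((3:ℝ)/4) y + Nu u * wgt ((1:ℝ)/2) y)
          * (‖deriv (deriv u) y‖₊ : ℝ≥0∞)) ^ (2:ℝ)) ^ ((1:ℝ)/2) := by
  have hswap : (∫⁻ x in Set.Ici (0:ℝ), Gfun u x ^ (2:ℝ))
      = ∫⁻ y, ∫⁻ x in Set.Ici (0:ℝ), (if x < y then gE u y ^ (2:ℝ) else 0) ∂volume ∂volume := by
    have h1 : ∀ x : ℝ, Gfun u x ^ (2:ℝ)
        = ∫⁻ y, (if x < y then gE u y ^ (2:ℝ) else 0) ∂volume := by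
      intro x
      rw [Gfun_sq u, ← lintegral_indicator measurableSet_Ioi]
      apply lintegral_congr; intro y
      simp [Set.indicator_apply, Set.mem_Ioi]
    simp_rw [h1]
    apply lintegral_lintegral_swap
    exact (Measurable.ite (measurableSet_lt measurable_fst measurable_snd)
      (((gE_meas hu).comp measurable_snd).pow_const _) measurable_const).aemeasurable
  rw [hswap]
  have hinner : ∀ y : ℝ, (∫⁻ x in Set.Ici (0:ℝ), (if x < y then gE u y ^ (2:ℝ) else 0) ∂volume)
      = gE u y ^ (2:ℝ) * ENNReal.ofReal y := by
    intro y
    have h : ∀ x : ℝ, (if x < y then gE u y ^ (2:ℝ) else 0)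
        = (Set.Iio y).indicator (fun _ => gE u y ^ (2:ℝ)) x := by
      intro x; simp [Set.indicator_apply, Set.mem_Iio]
    simp_rw [h]
    rw [lintegral_indicator measurableSet_Iio, setLIntegral_const]
    congr 1
    rw [Measure.restrict_apply measurableSet_Iio]
    have hset : Set.Iio y ∩ Set.Ici 0 = Set.Ico 0 y := by
      ext t; simp [Set.mem_Ico, and_comm]
    rw [hset, Real.volume_Ico, sub_zero]
  refine ENNReal.rpow_le_rpow ?_ (by norm_num)
  calc ∫⁻ y, ∫⁻ x in Set.Ici (0:ℝ), (if x < y then gE u y ^ (2:ℝ) else 0) ∂volume ∂volume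
      = ∫⁻ y, gE u y ^ (2:ℝ) * ENNReal.ofReal y ∂volume := lintegral_congr hinner
    _ ≤ ∫⁻ y, wgt ((1:ℝ)/2) y * gE u y ^ (2:ℝ) ∂volume := by
        apply lintegral_mono; intro y
        dsimp only
        rw [mul_comm]
        exact mul_le_mul_left (ofReal_le_wgt y) _
    _ = _ := lintegral_congr (pointwise_key u)

lemma GG_le (hu : ContDiff ℝ 2 u) :
    (∫⁻ x in Set.Ici (0:ℝ), Gfun u x ^ (2:ℝ)) ^ ((1:ℝ)/2)
      ≤ wnorm ((3:ℝ)/2) (fun y => deriv (deriv u) y)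
        + h1norm u * wnorm 1 (fun y => deriv (deriv u) y) := by
  refine (GG_key hu).trans ?_
  refine (minkowski_wgt (cont_d2 hu) (Nu u) _ _).trans ?_
  rw [wnorm_eq' ((3:ℝ)/2) ((3:ℝ)/4) (by norm_num), wnorm_eq' 1 ((1:ℝ)/2) (by norm_num)]
  gcongr
  exact N_le_h1 u

end main2

section aop
variable {u : ℝ → ℝ} {f f' : ℝ × ℝ → ℂ}

lemma aop_bound (hu : ContDiff ℝ 2 u) (hf' : Measurable f') {x k : ℝ} (hx : (0:ℝ) ≤ x)
    (hsec : (fun y => f (y, k)) =ᵐ[volume.restrict (Set.Ici 0)] fun y => f' (y, k)) :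
    (‖Aop u f x k‖₊ : ℝ≥0∞)
      ≤ Gfun u x * (∫⁻ y in Set.Ici (0:ℝ), ((‖f' (y, k)‖₊ : ℝ≥0∞)) ^ (2:ℝ)) ^ ((1:ℝ)/2) := by
  have hIoi : Set.Ioi x ⊆ Set.Ici (0:ℝ) := fun y hy => le_of_lt (lt_of_le_of_lt hx hy)
  have hsec' : (fun y => f (y, k)) =ᵐ[volume.restrict (Set.Ioi x)] fun y => f' (y, k) :=
    hsec.filter_mono (ae_mono (Measure.restrict_mono hIoi le_rfl))
  have step1 : (‖Aop u f x k‖₊ : ℝ≥0∞)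
      ≤ ∫⁻ y in Set.Ioi x, (‖(2 * Complex.I * (phi u x y : ℂ))
          * ((deriv (deriv u) y / (2 * mfun u y) : ℝ) : ℂ)
          * Complex.exp (2 * Complex.I * (k : ℂ) * (phi u x y : ℂ)) * f (y, k)‖₊ : ℝ≥0∞) :=
    enorm_integral_le_lintegral_enorm _
  have step2 : (∫⁻ y in Set.Ioi x, (‖(2 * Complex.I * (phi u x y : ℂ))
          * ((deriv (deriv u) y / (2 * mfun u y) : ℝ) : ℂ)
          * Complex.exp (2 * Complex.I * (k : ℂ) * (phi u x y : ℂ)) * f (y, k)‖₊ : ℝ≥0∞))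
      ≤ ∫⁻ y in Set.Ioi x, gE u y * (‖f (y, k)‖₊ : ℝ≥0∞) := by
    apply lintegral_mono_ae
    filter_upwards [ae_restrict_mem measurableSet_Ioi] with y hy
    have hxy : x ≤ y := le_of_lt hy
    calc (‖(2 * Complex.I * (phi u x y : ℂ))
          * ((deriv (deriv u) y / (2 * mfun u y) : ℝ) : ℂ)
          * Complex.exp (2 * Complex.I * (k : ℂ) * (phi u x y : ℂ)) * f (y, k)‖₊ : ℝ≥0∞)
        = ENNReal.ofReal ‖(2 * Complex.I * (phi u x y : ℂ))
          * ((deriv (deriv u) y / (2 * mfun u y) : ℝ) : ℂ)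
          * Complex.exp (2 * Complex.I * (k : ℂ) * (phi u x y : ℂ)) * f (y, k)‖ :=
          (ofReal_norm_eq_enorm _).symm
      _ ≤ ENNReal.ofReal (|phi u x y| * |deriv (deriv u) y| * ‖f (y, k)‖) :=
          ENNReal.ofReal_le_ofReal (integrand_norm (mfun_ge_one u y) _ _ _)
      _ = ENNReal.ofReal (phi u x y) * ENNReal.ofReal ‖(deriv (deriv u) y : ℝ)‖
            * ENNReal.ofReal ‖f (y, k)‖ := by
          rw [ENNReal.ofReal_mul (by positivity), ENNReal.ofReal_mul (abs_nonneg _),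
            abs_of_nonneg (phi_nonneg hxy)]
          rfl
      _ ≤ (wgt ((1:ℝ)/2) y + Nu u * wgt ((1:ℝ)/4) y) * (‖deriv (deriv u) y‖₊ : ℝ≥0∞)
            * (‖f (y, k)‖₊ : ℝ≥0∞) := by
          rw [ofReal_norm_eq_enorm, ofReal_norm_eq_enorm]
          exact mul_le_mul_left (mul_le_mul_left
            (phi_bound (cont_d1 hu) hx hxy) _) _
      _ = gE u y * (‖f (y, k)‖₊ : ℝ≥0∞) := rfl
  have step3 : (∫⁻ y in Set.Ioi x, gE u y * (‖f (y, k)‖₊ : ℝ≥0∞))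
      = ∫⁻ y in Set.Ioi x, gE u y * (‖f' (y, k)‖₊ : ℝ≥0∞) := by
    apply lintegral_congr_ae
    filter_upwards [hsec'] with y hy
    rw [hy]
  have step4 : (∫⁻ y in Set.Ioi x, gE u y * (‖f' (y, k)‖₊ : ℝ≥0∞))
      ≤ Gfun u x * (∫⁻ y in Set.Ioi x, ((‖f' (y, k)‖₊ : ℝ≥0∞)) ^ (2:ℝ)) ^ ((1:ℝ)/2) := by
    have hsecmeas : Measurable fun y => (‖f' (y, k)‖₊ : ℝ≥0∞) := by
      have h : Measurable fun y : ℝ => f' (y, k) :=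
        hf'.comp (measurable_id.prodMk measurable_const)
      exact h.nnnorm.coe_nnreal_ennreal
    have hcs := ENNReal.lintegral_mul_le_Lp_mul_Lq (volume.restrict (Set.Ioi x))
      Real.HolderConjugate.two_two
      (f := gE u) (g := fun y => (‖f' (y, k)‖₊ : ℝ≥0∞))
      (gE_meas hu).aemeasurable hsecmeas.aemeasurable
    simpa [Gfun] using hcs
  refine ((step1.trans step2).trans_eq step3).trans (step4.trans ?_)
  exact mul_le_mul_right (ENNReal.rpow_le_rpow (lintegral_mono_set hIoi) (by norm_num)) _

end aop

/-- Operator bounds for `A` on `L²([0,∞)×ℝ)`. -/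
theorem stmt4 :
    ∃ C : ℝ≥0, 0 < C ∧ ∀ u : ℝ → ℝ, ContDiff ℝ 2 u → MemH23 u →
      ∀ f : ℝ × ℝ → ℂ, MemLp f 2 ((volume.restrict (Set.Ici 0)).prod volume) →
        (∀ x : ℝ, 0 ≤ x →
          eLpNorm (fun k => Aop u f x k) 2 volume
            ≤ (C : ℝ≥0∞) * (wnorm 1 (fun y => deriv (deriv u) y)
                + h1norm u * wnorm ((1 : ℝ) / 2) (fun y => deriv (deriv u) y))
              * eLpNorm f 2 ((volume.restrict (Set.Ici 0)).prod volume)) ∧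
        eLpNorm (fun p : ℝ × ℝ => Aop u f p.1 p.2) 2 ((volume.restrict (Set.Ici 0)).prod volume)
          ≤ (C : ℝ≥0∞) * (wnorm ((3 : ℝ) / 2) (fun y => deriv (deriv u) y)
              + h1norm u * wnorm 1 (fun y => deriv (deriv u) y))
            * eLpNorm f 2 ((volume.restrict (Set.Ici 0)).prod volume) := by
  refine ⟨1, one_pos, ?_⟩
  intro u hu _hH f hf
  obtain ⟨fm, hfm_meas, hfm_ae⟩ : ∃ g, Measurable g ∧
      f =ᵐ[(volume.restrict (Set.Ici 0)).prod volume] g :=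
    ⟨hf.1.mk f, hf.1.stronglyMeasurable_mk.measurable, hf.1.ae_eq_mk⟩
  have hL : eLpNorm f 2 ((volume.restrict (Set.Ici 0)).prod volume)
      = eLpNorm fm 2 ((volume.restrict (Set.Ici 0)).prod volume) := eLpNorm_congr_ae hfm_ae
  have hqmp : Measure.QuasiMeasurePreserving (Prod.swap : ℝ × ℝ → ℝ × ℝ)
      (volume.prod (volume.restrict (Set.Ici 0))) ((volume.restrict (Set.Ici 0)).prod volume) :=
    ⟨measurable_swap, by rw [Measure.prod_swap]⟩
  have hswap : ∀ᵐ z ∂(volume.prod (volume.restrict (Set.Ici 0))), f z.swap = fm z.swap :=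
    hqmp.ae hfm_ae
  have hsec_ae : ∀ᵐ k ∂(volume : Measure ℝ),
      (fun y => f (y, k)) =ᵐ[volume.restrict (Set.Ici 0)] fun y => fm (y, k) := by
    filter_upwards [Measure.ae_ae_of_ae_prod hswap] with k hk
    exact hk
  have hpm : Measurable fun p : ℝ × ℝ => (‖fm p‖₊ : ℝ≥0∞) ^ (2:ℝ) :=
    hfm_meas.nnnorm.coe_nnreal_ennreal.pow_const _
  set F : ℝ → ℝ≥0∞ :=
    fun k => (∫⁻ y in Set.Ici (0:ℝ), (‖fm (y, k)‖₊ : ℝ≥0∞) ^ (2:ℝ)) ^ ((1:ℝ)/2) with hF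
  have hFmeas : Measurable F := (Measurable.lintegral_prod_left' hpm).pow_const _
  have hFsq : ∀ k, F k ^ (2:ℝ) = ∫⁻ y in Set.Ici (0:ℝ), (‖fm (y, k)‖₊ : ℝ≥0∞) ^ (2:ℝ) := by
    intro k; rw [hF, ← ENNReal.rpow_mul]; norm_num
  have hLL : (∫⁻ k, F k ^ (2:ℝ) ∂volume)
      = ∫⁻ p, (‖fm p‖₊ : ℝ≥0∞) ^ (2:ℝ) ∂((volume.restrict (Set.Ici 0)).prod volume) := by
    calc ∫⁻ k, F k ^ (2:ℝ) ∂volume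
        = ∫⁻ k, ∫⁻ y in Set.Ici (0:ℝ), (‖fm (y, k)‖₊ : ℝ≥0∞) ^ (2:ℝ) ∂volume :=
          lintegral_congr hFsq
      _ = _ := (lintegral_prod_symm _ hpm.aemeasurable).symm
  have hLnorm : eLpNorm fm 2 ((volume.restrict (Set.Ici 0)).prod volume)
      = (∫⁻ p, (‖fm p‖₊ : ℝ≥0∞) ^ (2:ℝ)
          ∂((volume.restrict (Set.Ici 0)).prod volume)) ^ ((1:ℝ)/2) := by
    rw [eLpNorm_eq_lintegral_rpow_enorm_toReal two_ne_zero ENNReal.ofNat_ne_top]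
    simp only [ENNReal.toReal_ofNat, enorm_eq_nnnorm]
  have hFfin : (∫⁻ k, F k ^ (2:ℝ) ∂volume) ^ ((1:ℝ)/2)
      = eLpNorm f 2 ((volume.restrict (Set.Ici 0)).prod volume) := by
    rw [hLL, hL, hLnorm]
  constructor
  · intro x hx
    rw [ENNReal.coe_one, one_mul]
    calc eLpNorm (fun k => Aop u f x k) 2 volume
        = (∫⁻ k, (‖Aop u f x k‖₊ : ℝ≥0∞) ^ (2:ℝ) ∂volume) ^ ((1:ℝ)/2) := by
          rw [eLpNorm_eq_lintegral_rpow_enorm_toReal two_ne_zero ENNReal.ofNat_ne_top]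
          simp only [ENNReal.toReal_ofNat, enorm_eq_nnnorm]
      _ ≤ (∫⁻ k, (Gfun u x * F k) ^ (2:ℝ) ∂volume) ^ ((1:ℝ)/2) := by
          refine ENNReal.rpow_le_rpow ?_ (by norm_num)
          refine lintegral_mono_ae ?_
          filter_upwards [hsec_ae] with k hk
          exact ENNReal.rpow_le_rpow (aop_bound hu hfm_meas hx hk) (by norm_num)
      _ = (Gfun u x ^ (2:ℝ) * ∫⁻ k, F k ^ (2:ℝ) ∂volume) ^ ((1:ℝ)/2) := by
          congr 1
          rw [← lintegral_const_mul'' _ (hFmeas.pow_const _).aemeasurable]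
          exact lintegral_congr fun k => ENNReal.mul_rpow_of_nonneg _ _ (by norm_num)
      _ = Gfun u x * (∫⁻ k, F k ^ (2:ℝ) ∂volume) ^ ((1:ℝ)/2) := by
          rw [ENNReal.mul_rpow_of_nonneg _ _ (by norm_num : (0:ℝ) ≤ 1/2),
            ← ENNReal.rpow_mul]
          norm_num
      _ ≤ _ := by
          rw [hFfin]
          exact mul_le_mul_left (G_le hu x) _
  · rw [ENNReal.coe_one, one_mul]
    calc eLpNorm (fun p : ℝ × ℝ => Aop u f p.1 p.2) 2
          ((volume.restrict (Set.Ici 0)).prod volume)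
        = (∫⁻ p, (‖Aop u f p.1 p.2‖₊ : ℝ≥0∞) ^ (2:ℝ)
            ∂((volume.restrict (Set.Ici 0)).prod volume)) ^ ((1:ℝ)/2) := by
          rw [eLpNorm_eq_lintegral_rpow_enorm_toReal two_ne_zero ENNReal.ofNat_ne_top]
          simp only [ENNReal.toReal_ofNat, enorm_eq_nnnorm]
      _ ≤ (∫⁻ p, (Gfun u p.1 * F p.2) ^ (2:ℝ)
            ∂((volume.restrict (Set.Ici 0)).prod volume)) ^ ((1:ℝ)/2) := by
          refine ENNReal.rpow_le_rpow ?_ (by norm_num)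
          refine lintegral_mono_ae ?_
          have h1 : ∀ᵐ p ∂((volume.restrict (Set.Ici 0)).prod volume),
              p.1 ∈ Set.Ici (0:ℝ) :=
            (Measure.quasiMeasurePreserving_fst (μ := volume.restrict (Set.Ici (0:ℝ)))
              (ν := (volume : Measure ℝ))).ae (ae_restrict_mem measurableSet_Ici)
          have h2 : ∀ᵐ p : ℝ × ℝ ∂((volume.restrict (Set.Ici (0:ℝ))).prod volume),
              (fun y => f (y, p.2)) =ᵐ[volume.restrict (Set.Ici (0:ℝ))] fun y => fm (y, p.2) :=
            (Measure.quasiMeasurePreserving_snd (μ := volume.restrict (Set.Ici (0:ℝ)))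
              (ν := (volume : Measure ℝ))).ae hsec_ae
          filter_upwards [h1, h2] with p hp1 hp2
          exact ENNReal.rpow_le_rpow (aop_bound hu hfm_meas hp1 hp2) (by norm_num)
      _ = ((∫⁻ x in Set.Ici (0:ℝ), Gfun u x ^ (2:ℝ)) * ∫⁻ k, F k ^ (2:ℝ) ∂volume)
            ^ ((1:ℝ)/2) := by
          congr 1
          calc ∫⁻ p, (Gfun u p.1 * F p.2) ^ (2:ℝ)
                ∂((volume.restrict (Set.Ici 0)).prod volume)
              = ∫⁻ p, (Gfun u p.1) ^ (2:ℝ) * (F p.2) ^ (2:ℝ)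
                ∂((volume.restrict (Set.Ici 0)).prod volume) :=
                lintegral_congr fun p => ENNReal.mul_rpow_of_nonneg _ _ (by norm_num)
            _ = _ := lintegral_prod_mul ((Gfun_meas hu).pow_const _).aemeasurable
                (hFmeas.pow_const _).aemeasurable
      _ = (∫⁻ x in Set.Ici (0:ℝ), Gfun u x ^ (2:ℝ)) ^ ((1:ℝ)/2)
            * (∫⁻ k, F k ^ (2:ℝ) ∂volume) ^ ((1:ℝ)/2) :=
          ENNReal.mul_rpow_of_nonneg _ _ (by norm_num)
      _ ≤ _ := by
          rw [hFfin]
          exact mul_le_mul_left (GG_le hu) _
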